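/- arXiv:1503.00754 — 2 statements merged into one kernel-verified Lean document; each statement's English description precedes it below -/
import Mathlib

section
/- For every nonzero γ ∈ ℂ, the map σ(α₂, α₃, α₄) = (i·α₂·α₃⁻², α₃⁻¹, -i·α₄) sends solutions of the system {α₄⁸ - 4α₄⁴ + γ² = 0, α₃² - i·α₃·α₄² - 1 = 0, γ·α₂ - 2i·α₄³ + α₃·α₄⁵ = 0} with α₃ ≠ 0 to solutions of the same system. -/
open Complex

/-!
Since `(-i)⁴ = 1`, the first equation is invariant under `α₄ ↦ -i·α₄`. The other two
transformed equations are unit multiples of combinations of the original ones: the second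
becomes `-α₃⁻²` times itself, and the third becomes `i·α₃⁻²` times
`(third) - 2i·α₄³·(second)`.
-/

theorem neg_I_mul_pow_four (z : ℂ) : (-I * z) ^ 4 = z ^ 4 := by
  linear_combination (I ^ 2 - 1) * z ^ 4 * I_sq

theorem sigma_first_eq (γ z : ℂ) :
    (-I * z) ^ 8 - 4 * (-I * z) ^ 4 + γ ^ 2 = z ^ 8 - 4 * z ^ 4 + γ ^ 2 := by
  rw [show 8 = 4 * 2 from rfl, pow_mul, pow_mul, neg_I_mul_pow_four]

theorem sigma_second_eq {a : ℂ} (ha : a ≠ 0) (b : ℂ) :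
    a⁻¹ ^ 2 - I * a⁻¹ * (-I * b) ^ 2 - 1 = -(a ^ 2)⁻¹ * (a ^ 2 - I * a * b ^ 2 - 1) := by
  field_simp
  linear_combination -(I * a * b ^ 2) * I_sq

theorem sigma_third_eq (γ c : ℂ) {a : ℂ} (ha : a ≠ 0) (b : ℂ) :
    γ * (I * c * (a ^ 2)⁻¹) - 2 * I * (-I * b) ^ 3 + a⁻¹ * (-I * b) ^ 5 =
      I * (a ^ 2)⁻¹ *
        ((γ * c - 2 * I * b ^ 3 + a * b ^ 5) - 2 * I * b ^ 3 * (a ^ 2 - I * a * b ^ 2 - 1)) := by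
  field_simp
  linear_combination (2 * I * a ^ 2 * b ^ 3 - (I ^ 2 + 1) * a * b ^ 5) * I_sq

theorem stmt_4_general (γ α₂ α₃ α₄ : ℂ) (hα₃ : α₃ ≠ 0)
    (h1 : α₄ ^ 8 - 4 * α₄ ^ 4 + γ ^ 2 = 0)
    (h2 : α₃ ^ 2 - I * α₃ * α₄ ^ 2 - 1 = 0)
    (h3 : γ * α₂ - 2 * I * α₄ ^ 3 + α₃ * α₄ ^ 5 = 0) :
    (-I * α₄) ^ 8 - 4 * (-I * α₄) ^ 4 + γ ^ 2 = 0 ∧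
    (α₃⁻¹) ^ 2 - I * α₃⁻¹ * (-I * α₄) ^ 2 - 1 = 0 ∧
    γ * (I * α₂ * (α₃ ^ 2)⁻¹) - 2 * I * (-I * α₄) ^ 3 + α₃⁻¹ * (-I * α₄) ^ 5 = 0 := by
  refine ⟨?_, ?_, ?_⟩
  · rw [sigma_first_eq, h1]
  · rw [sigma_second_eq hα₃, h2, mul_zero]
  · rw [sigma_third_eq γ α₂ hα₃, h2, h3]
    ring

/-- The map σ(α₂, α₃, α₄) = (i·α₂·α₃⁻², α₃⁻¹, -i·α₄) sends solutions of the
point-scheme system (with α₃ ≠ 0) to solutions of the same system. -/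
theorem stmt_4 (γ α₂ α₃ α₄ : ℂ) (hγ : γ ≠ 0) (hα₃ : α₃ ≠ 0)
    (h1 : α₄ ^ 8 - 4 * α₄ ^ 4 + γ ^ 2 = 0)
    (h2 : α₃ ^ 2 - I * α₃ * α₄ ^ 2 - 1 = 0)
    (h3 : γ * α₂ - 2 * I * α₄ ^ 3 + α₃ * α₄ ^ 5 = 0) :
    (-I * α₄) ^ 8 - 4 * (-I * α₄) ^ 4 + γ ^ 2 = 0 ∧
    (α₃⁻¹) ^ 2 - I * α₃⁻¹ * (-I * α₄) ^ 2 - 1 = 0 ∧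
    γ * (I * α₂ * (α₃ ^ 2)⁻¹) - 2 * I * (-I * α₄) ^ 3 + α₃⁻¹ * (-I * α₄) ^ 5 = 0 :=
  stmt_4_general γ α₂ α₃ α₄ hα₃ h1 h2 h3
end

section
/- Let γ ∈ ℂ be nonzero with γ(γ² - 16) ≠ 0. Then the projective variety in ℙ³ (coordinates M₁₂, M₁₄, M₂₃, M₃₄) cut out by q₁ = M₁₄M₂₃ + M₁₂M₃₄ and q₂ = M₁₂² + M₃₄² + γM₁₄M₂₃ - M₁₄² - M₂₃² is smooth, i.e., at every common zero (not all coordinates zero) of q₁ and q₂, the 2×4 Jacobian matrix of (q₁, q₂) has rank 2. -/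
/-- End-game contradiction: if both squared equalities hold, the hypotheses are violated. -/
lemma stmt_8_key (γ : ℂ) (hγ : γ ≠ 0) (h16 : γ ^ 2 ≠ 16) (M12 M14 M23 M34 : ℂ)
    (hne : ¬(M12 = 0 ∧ M14 = 0 ∧ M23 = 0 ∧ M34 = 0))
    (h1 : M14 * M23 + M12 * M34 = 0)
    (h2 : M12 ^ 2 + M34 ^ 2 + γ * M14 * M23 - M14 ^ 2 - M23 ^ 2 = 0)
    (hA : M34 ^ 2 = M12 ^ 2) (hB : M14 ^ 2 = M23 ^ 2) : False := by
  have hA' : (M34 - M12) * (M34 + M12) = 0 := by linear_combination hA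
  have hB' : (M14 - M23) * (M14 + M23) = 0 := by linear_combination hB
  rcases mul_eq_zero.mp hA' with ha | ha <;> rcases mul_eq_zero.mp hB' with hb | hb
  · -- M34 = M12, M14 = M23
    have hd : M34 = M12 := by linear_combination ha
    have he : M14 = M23 := by linear_combination hb
    rw [hd, he] at h1 h2
    have k : (γ - 4) * M23 ^ 2 = 0 := by linear_combination h2 - 2 * h1
    rcases mul_eq_zero.mp k with k | k
    · exact h16 (by linear_combination (γ + 4) * k)
    · have h23 : M23 = 0 := pow_eq_zero_iff (n := 2) (by norm_num) |>.mp k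
      have h12 : M12 = 0 := by
        have : M12 ^ 2 = 0 := by linear_combination h1 - M23 * h23
        exact pow_eq_zero_iff (n := 2) (by norm_num) |>.mp this
      exact hne ⟨h12, by simp [he, h23], h23, by simp [hd, h12]⟩
  · -- M34 = M12, M14 = -M23
    have hd : M34 = M12 := by linear_combination ha
    have he : M14 = -M23 := by linear_combination hb
    rw [hd, he] at h1 h2
    have k : γ * M23 ^ 2 = 0 := by linear_combination -h2 + 2 * h1
    rcases mul_eq_zero.mp k with k | k
    · exact hγ k
    · have h23 : M23 = 0 := pow_eq_zero_iff (n := 2) (by norm_num) |>.mp k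
      have h12 : M12 = 0 := by
        have : M12 ^ 2 = 0 := by linear_combination h1 + M23 * h23
        exact pow_eq_zero_iff (n := 2) (by norm_num) |>.mp this
      exact hne ⟨h12, by simp [he, h23], h23, by simp [hd, h12]⟩
  · -- M34 = -M12, M14 = M23
    have hd : M34 = -M12 := by linear_combination ha
    have he : M14 = M23 := by linear_combination hb
    rw [hd, he] at h1 h2
    have k : γ * M23 ^ 2 = 0 := by linear_combination h2 + 2 * h1
    rcases mul_eq_zero.mp k with k | k
    · exact hγ k
    · have h23 : M23 = 0 := pow_eq_zero_iff (n := 2) (by norm_num) |>.mp k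
      have h12 : M12 = 0 := by
        have : M12 ^ 2 = 0 := by linear_combination -h1 + M23 * h23
        exact pow_eq_zero_iff (n := 2) (by norm_num) |>.mp this
      exact hne ⟨h12, by simp [he, h23], h23, by simp [hd, h12]⟩
  · -- M34 = -M12, M14 = -M23
    have hd : M34 = -M12 := by linear_combination ha
    have he : M14 = -M23 := by linear_combination hb
    rw [hd, he] at h1 h2
    have k : (γ + 4) * M23 ^ 2 = 0 := by linear_combination -h2 - 2 * h1
    rcases mul_eq_zero.mp k with k | k
    · exact h16 (by linear_combination (γ - 4) * k)
    · have h23 : M23 = 0 := pow_eq_zero_iff (n := 2) (by norm_num) |>.mp k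
      have h12 : M12 = 0 := by
        have : M12 ^ 2 = 0 := by linear_combination -h1 - M23 * h23
        exact pow_eq_zero_iff (n := 2) (by norm_num) |>.mp this
      exact hne ⟨h12, by simp [he, h23], h23, by simp [hd, h12]⟩

/-- For γ ≠ 0 with γ² ≠ 16, at every nonzero common zero of
q₁ = M₁₄M₂₃ + M₁₂M₃₄ and q₂ = M₁₂² + M₃₄² + γM₁₄M₂₃ - M₁₄² - M₂₃², the 2×4
Jacobian matrix (with q₂ reduced modulo q₁) has rank 2. -/
theorem stmt_8 (γ : ℂ) (hγ : γ ≠ 0) (h16 : γ ^ 2 ≠ 16) (M12 M14 M23 M34 : ℂ)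
    (hne : ¬(M12 = 0 ∧ M14 = 0 ∧ M23 = 0 ∧ M34 = 0))
    (h1 : M14 * M23 + M12 * M34 = 0)
    (h2 : M12 ^ 2 + M34 ^ 2 + γ * M14 * M23 - M14 ^ 2 - M23 ^ 2 = 0) :
    (!![M34, M23, M14, M12;
        2 * M12 - (γ / 2) * M34, -(2 * M14 - (γ / 2) * M23),
          -(2 * M23 - (γ / 2) * M14), 2 * M34 - (γ / 2) * M12] :
      Matrix (Fin 2) (Fin 4) ℂ).rank = 2 := by
  have hli : LinearIndependent ℂ
      (!![M34, M23, M14, M12;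
        2 * M12 - (γ / 2) * M34, -(2 * M14 - (γ / 2) * M23),
          -(2 * M23 - (γ / 2) * M14), 2 * M34 - (γ / 2) * M12] :
      Matrix (Fin 2) (Fin 4) ℂ) := by
    show LinearIndependent ℂ
      ![![M34, M23, M14, M12],
        ![2 * M12 - (γ / 2) * M34, -(2 * M14 - (γ / 2) * M23),
          -(2 * M23 - (γ / 2) * M14), 2 * M34 - (γ / 2) * M12]]
    rw [linearIndependent_fin2]
    constructor
    · -- second row nonzero
      intro hz
      have e1 : 2 * M12 - (γ / 2) * M34 = 0 := congrFun hz 0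
      have e2 : -(2 * M14 - (γ / 2) * M23) = 0 := congrFun hz 1
      have e3 : -(2 * M23 - (γ / 2) * M14) = 0 := congrFun hz 2
      have e4 : 2 * M34 - (γ / 2) * M12 = 0 := congrFun hz 3
      have h416 : γ ^ 2 - 16 ≠ 0 := fun h => h16 (by linear_combination h)
      have k12 : (γ ^ 2 - 16) * M12 = 0 := by linear_combination (-8 : ℂ) * e1 - 2 * γ * e4
      have k34 : (γ ^ 2 - 16) * M34 = 0 := by linear_combination (-8 : ℂ) * e4 - 2 * γ * e1
      have k14 : (γ ^ 2 - 16) * M14 = 0 := by linear_combination (8 : ℂ) * e2 + 2 * γ * e3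
      have k23 : (γ ^ 2 - 16) * M23 = 0 := by linear_combination (8 : ℂ) * e3 + 2 * γ * e2
      exact hne ⟨(mul_eq_zero.mp k12).resolve_left h416,
        (mul_eq_zero.mp k14).resolve_left h416,
        (mul_eq_zero.mp k23).resolve_left h416,
        (mul_eq_zero.mp k34).resolve_left h416⟩
    · -- no scalar multiple
      intro a hcontra
      have e1 : a * (2 * M12 - (γ / 2) * M34) = M34 := congrFun hcontra 0
      have e2 : a * (-(2 * M14 - (γ / 2) * M23)) = M23 := congrFun hcontra 1
      have e3 : a * (-(2 * M23 - (γ / 2) * M14)) = M14 := congrFun hcontra 2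
      have e4 : a * (2 * M34 - (γ / 2) * M12) = M12 := congrFun hcontra 3
      by_cases hA : M34 ^ 2 = M12 ^ 2
      · by_cases hB : M14 ^ 2 = M23 ^ 2
        · exact stmt_8_key γ hγ h16 M12 M14 M23 M34 hne h1 h2 hA hB
        · -- 2a(M23² - M14²) = 0, so a = 0, so row1 = 0
          have k : 2 * a * (M23 ^ 2 - M14 ^ 2) = 0 := by
            linear_combination M14 * e2 - M23 * e3
          have ha0 : a = 0 := by
            rcases mul_eq_zero.mp k with k | k
            · rcases mul_eq_zero.mp k with k | k
              · exact absurd k two_ne_zero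
              · exact k
            · exact absurd (by linear_combination -k) hB
          rw [ha0] at e1 e2 e3 e4
          exact hne ⟨by linear_combination -e4, by linear_combination -e3,
            by linear_combination -e2, by linear_combination -e1⟩
      · have k : 2 * a * (M12 ^ 2 - M34 ^ 2) = 0 := by
          linear_combination M12 * e1 - M34 * e4
        have ha0 : a = 0 := by
          rcases mul_eq_zero.mp k with k | k
          · rcases mul_eq_zero.mp k with k | k
            · exact absurd k two_ne_zero
            · exact k
          · exact absurd (by linear_combination -k) hA
        rw [ha0] at e1 e2 e3 e4
        exact hne ⟨by linear_combination -e4, by linear_combination -e3,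
          by linear_combination -e2, by linear_combination -e1⟩
  have := hli.rank_matrix
  simpa using this
end
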